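/- arXiv:1112.5103 — 2 statements merged into one kernel-verified Lean document; each statement's English description precedes it below -/
import Mathlib

section
/- (Hadamard convexity consequence) Let f be a transcendental entire function with maximum modulus M(r) = max_{|z|=r} |f(z)|. Then there exists a constant R₁ > 0 (depending on f) such that M(r^c) ≥ M(r)^c for all r ≥ R₁ and all c > 1. -/
/-!
By Hadamard's three circles theorem, `ψ(s) = log M(eˢ)` is convex, and since `f` is not a
polynomial, Cauchy's estimates force `ψ(s) / s → ∞`. Fix `a > 0`; once `ψ(s) / s ≥ ψ(a) / a`,
comparing the secant slopes of `ψ` from `a` to `s` and to `c s` gives `ψ(c s) ≥ c ψ(s)`, which is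
`M(r ^ c) ≥ M(r) ^ c` for `r = eˢ`.
-/

open Metric Filter Set Topology
open scoped Nat

noncomputable def maxModulus (f : ℂ → ℂ) (r : ℝ) : ℝ :=
  sSup ((fun z => ‖f z‖) '' sphere (0 : ℂ) r)

section MaxModulus

variable {f : ℂ → ℂ}

lemma norm_le_maxModulus (hf : Continuous f) {r : ℝ} {z : ℂ} (hz : z ∈ sphere (0 : ℂ) r) :
    ‖f z‖ ≤ maxModulus f r :=
  le_csSup ((isCompact_sphere 0 r).image (continuous_norm.comp hf)).bddAbove ⟨z, hz, rfl⟩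

lemma maxModulus_nonneg (f : ℂ → ℂ) (r : ℝ) : 0 ≤ maxModulus f r :=
  Real.sSup_nonneg (by rintro _ ⟨z, _, rfl⟩; exact norm_nonneg _)

lemma maxModulus_le {r C : ℝ} (hC : 0 ≤ C) (h : ∀ z ∈ sphere (0 : ℂ) r, ‖f z‖ ≤ C) :
    maxModulus f r ≤ C :=
  Real.sSup_le (by rintro _ ⟨z, hz, rfl⟩; exact h z hz) hC

/-- Hadamard's three circles theorem, obtained from the three lines theorem for `f ∘ exp`. -/
theorem maxModulus_exp_le_interp (hf : Differentiable ℂ f) {A B x : ℝ} (hAB : A < B)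
    (hx : x ∈ Icc A B) :
    maxModulus f (Real.exp x) ≤ maxModulus f (Real.exp A) ^ (1 - (x - A) / (B - A)) *
      maxModulus f (Real.exp B) ^ ((x - A) / (B - A)) := by
  have hedge (t : ℝ) : ∀ w ∈ Complex.re ⁻¹' {t}, ‖(f ∘ Complex.exp) w‖ ≤
      maxModulus f (Real.exp t) := by
    intro w hw
    exact norm_le_maxModulus hf.continuous (by simpa [Complex.norm_exp] using hw)
  have hbdd : BddAbove ((norm ∘ f ∘ Complex.exp) ''
      Complex.HadamardThreeLines.verticalClosedStrip A B) := by
    obtain ⟨C, hC⟩ := (isCompact_closedBall (0 : ℂ) (Real.exp B)).exists_bound_of_continuousOn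
      hf.continuous.continuousOn
    refine ⟨C, ?_⟩
    rintro _ ⟨w, hw, rfl⟩
    exact hC _ (by simpa [Complex.norm_exp] using hw.2)
  refine maxModulus_le (mul_nonneg (Real.rpow_nonneg (maxModulus_nonneg _ _) _)
    (Real.rpow_nonneg (maxModulus_nonneg _ _) _)) fun z hz => ?_
  have hz0 : z ≠ 0 := ne_zero_of_mem_sphere (Real.exp_pos x).ne' ⟨z, hz⟩
  have hlog : (Complex.log z).re = x := by
    simp [Complex.log_re, mem_sphere_zero_iff_norm.1 hz]
  have h := Complex.HadamardThreeLines.norm_le_interp_of_mem_verticalClosedStrip' hAB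
    (z := Complex.log z) (by simpa [Complex.HadamardThreeLines.verticalClosedStrip, hlog] using hx)
    (hf.comp Complex.differentiable_exp).diffContOnCl hbdd (hedge A) (hedge B)
  simpa [Complex.exp_log hz0, hlog] using h

theorem convexOn_log_maxModulus_exp (hf : Differentiable ℂ f) {s : Set ℝ} (hs : Convex ℝ s)
    (hpos : ∀ x ∈ s, 0 < maxModulus f (Real.exp x)) :
    ConvexOn ℝ s fun x => Real.log (maxModulus f (Real.exp x)) := by
  refine LinearOrder.convexOn_of_lt hs fun x hx y hy hxy a b ha hb hab => ?_
  have hmem : a • x + b • y ∈ Icc x y :=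
    convex_Icc x y (left_mem_Icc.2 hxy.le) (right_mem_Icc.2 hxy.le) ha.le hb.le hab
  have h := maxModulus_exp_le_interp hf hxy hmem
  have ht : (a • x + b • y - x) / (y - x) = b := by
    rw [div_eq_iff (sub_ne_zero.2 hxy.ne'), smul_eq_mul, smul_eq_mul]
    linear_combination x * hab
  rw [ht, show 1 - b = a by linarith] at h
  calc Real.log (maxModulus f (Real.exp (a • x + b • y)))
      ≤ Real.log (maxModulus f (Real.exp x) ^ a * maxModulus f (Real.exp y) ^ b) :=
        Real.log_le_log (hpos _ (hs hx hy ha.le hb.le hab)) h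
    _ = a • Real.log (maxModulus f (Real.exp x)) + b • Real.log (maxModulus f (Real.exp y)) := by
        rw [Real.log_mul (Real.rpow_pos_of_pos (hpos x hx) a).ne'
          (Real.rpow_pos_of_pos (hpos y hy) b).ne', Real.log_rpow (hpos x hx),
          Real.log_rpow (hpos y hy), smul_eq_mul, smul_eq_mul]

lemma iteratedDeriv_eq_zero_of_frequently_maxModulus_le (hf : Differentiable ℂ f) {K n : ℕ}
    (hK : ∃ᶠ r in atTop, maxModulus f r ≤ r ^ K) (hn : K < n) : iteratedDeriv n f 0 = 0 := by
  have hcauchy : ∃ᶠ r in atTop, ‖iteratedDeriv n f 0‖ ≤ n ! * (r ^ K / r ^ n) := by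
    refine (hK.and_eventually (eventually_gt_atTop 0)).mono fun r ⟨hr, hr0⟩ => ?_
    calc ‖iteratedDeriv n f 0‖ ≤ n ! * maxModulus f r / r ^ n :=
          Complex.norm_iteratedDeriv_le_of_forall_mem_sphere_norm_le n hr0 hf.diffContOnCl
            fun z hz => norm_le_maxModulus hf.continuous hz
      _ ≤ n ! * (r ^ K / r ^ n) := by
          rw [mul_div_assoc]
          gcongr
  have hlim : Tendsto (fun r : ℝ => (n ! : ℝ) * (r ^ K / r ^ n)) atTop (𝓝 0) := by
    simpa using (tendsto_pow_div_pow_atTop_zero hn).const_mul (n ! : ℝ)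
  exact norm_le_zero_iff.1 (le_of_tendsto_of_tendsto_of_frequently tendsto_const_nhds hlim hcauchy)

lemma exists_polynomial_eq_of_iteratedDeriv_eq_zero (hf : Differentiable ℂ f) {K : ℕ}
    (h : ∀ n, K < n → iteratedDeriv n f 0 = 0) :
    ∃ p : Polynomial ℂ, f = fun z => p.eval z := by
  refine ⟨∑ n ∈ Finset.range (K + 1),
    Polynomial.C ((n ! : ℂ)⁻¹ * iteratedDeriv n f 0) * Polynomial.X ^ n, funext fun z => ?_⟩
  rw [(Complex.hasSum_taylorSeries_of_entire hf 0 z).unique (hasSum_sum_of_ne_finset_zero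
    (s := Finset.range (K + 1)) fun n hn => by simp [h n (by simpa using hn)]),
    Polynomial.eval_finsetSum]
  refine Finset.sum_congr rfl fun n _ => ?_
  simp only [sub_zero, smul_eq_mul, Polynomial.eval_mul, Polynomial.eval_C, Polynomial.eval_pow,
    Polynomial.eval_X]
  ring

theorem eventually_pow_le_maxModulus (hf : Differentiable ℂ f)
    (htrans : ∀ p : Polynomial ℂ, f ≠ fun z => p.eval z) (K : ℕ) :
    ∀ᶠ r in atTop, r ^ K ≤ maxModulus f r := by
  by_contra h
  rw [not_eventually] at h
  obtain ⟨p, hp⟩ := exists_polynomial_eq_of_iteratedDeriv_eq_zero hf fun n hn =>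
    iteratedDeriv_eq_zero_of_frequently_maxModulus_le hf (h.mono fun _ hr => (not_le.1 hr).le) hn
  exact htrans p hp

theorem eventually_mul_le_log_maxModulus_exp (hf : Differentiable ℂ f)
    (htrans : ∀ p : Polynomial ℂ, f ≠ fun z => p.eval z) (C : ℝ) :
    ∀ᶠ s in atTop, C * s ≤ Real.log (maxModulus f (Real.exp s)) := by
  filter_upwards [Real.tendsto_exp_atTop.eventually (eventually_pow_le_maxModulus hf htrans ⌈C⌉₊),
    eventually_ge_atTop 0] with s hs hs0
  calc C * s ≤ ⌈C⌉₊ * s := mul_le_mul_of_nonneg_right (Nat.le_ceil C) hs0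
    _ = Real.log (Real.exp s ^ ⌈C⌉₊) := by rw [Real.log_pow, Real.log_exp]
    _ ≤ Real.log (maxModulus f (Real.exp s)) := Real.log_le_log (by positivity) hs

end MaxModulus

theorem ConvexOn.mul_le_apply_mul {ψ : ℝ → ℝ} {a s c : ℝ} (hψ : ConvexOn ℝ (Ici a) ψ)
    (ha : 0 < a) (has : a < s) (hs : ψ a / a * s ≤ ψ s) (hc : 1 ≤ c) : c * ψ s ≤ ψ (c * s) := by
  have hcs : s ≤ c * s := le_mul_of_one_le_left (by linarith) hc
  have hsecant := hψ.secant_mono (a := a) self_mem_Ici has.le (has.le.trans hcs) has.ne'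
    (has.trans_le hcs).ne' hcs
  rw [div_le_div_iff₀ (by linarith) (by linarith)] at hsecant
  have hslope : s * ψ a ≤ a * ψ s := by
    rw [div_mul_eq_mul_div, div_le_iff₀ ha] at hs
    linarith
  have hgap : 0 ≤ (c - 1) * (a * ψ s - s * ψ a) := mul_nonneg (by linarith) (by linarith)
  -- `(ψ (c s) - c ψ s) (s - a)` is the secant gap plus `(c - 1) (a ψ s - s ψ a)`.
  refine le_of_mul_le_mul_right ?_ (sub_pos.2 has)
  linarith

lemma eventually_rpow_le_apply_rpow {g : ℝ → ℝ} (hpos : ∀ᶠ r in atTop, 0 < g r)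
    (h : ∀ᶠ s in atTop, ∀ c : ℝ, 1 < c →
      c * Real.log (g (Real.exp s)) ≤ Real.log (g (Real.exp (c * s)))) :
    ∀ᶠ r in atTop, ∀ c : ℝ, 1 < c → g r ^ c ≤ g (r ^ c) := by
  obtain ⟨R, hR⟩ := eventually_atTop.1 hpos
  filter_upwards [Real.tendsto_log_atTop.eventually h, eventually_ge_atTop (max R 1)]
    with r hr hrR c hc
  have hr1 : 1 ≤ r := le_of_max_le_right hrR
  have hr0 : 0 < r := one_pos.trans_le hr1
  have hgr : 0 < g r := hR r (le_of_max_le_left hrR)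
  have hgrc : 0 < g (r ^ c) :=
    hR _ ((le_of_max_le_left hrR).trans (Real.self_le_rpow_of_one_le hr1 hc.le))
  have hlog : c * Real.log (g r) ≤ Real.log (g (r ^ c)) := by
    have := hr c hc
    rwa [Real.exp_log hr0, mul_comm c (Real.log r), ← Real.rpow_def_of_pos hr0] at this
  calc g r ^ c = Real.exp (c * Real.log (g r)) := by rw [Real.rpow_def_of_pos hgr, mul_comm]
    _ ≤ Real.exp (Real.log (g (r ^ c))) := Real.exp_le_exp.2 hlog
    _ = g (r ^ c) := Real.exp_log hgrc

theorem hadamard_convexity_maximum_modulus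
    (f : ℂ → ℂ) (hf : Differentiable ℂ f)
    (htrans : ∀ p : Polynomial ℂ, f ≠ fun z => p.eval z)
    (M : ℝ → ℝ)
    (hM : ∀ r : ℝ, M r = sSup ((fun z => ‖f z‖) '' sphere (0:ℂ) r)) :
    ∃ R₁ : ℝ, 0 < R₁ ∧ ∀ r : ℝ, R₁ ≤ r → ∀ c : ℝ, 1 < c →
      M (r ^ c) ≥ (M r) ^ c := by
  obtain rfl : M = maxModulus f := funext hM
  set ψ : ℝ → ℝ := fun s => Real.log (maxModulus f (Real.exp s))
  have hpos : ∀ᶠ r in atTop, 0 < maxModulus f r :=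
    (eventually_pow_le_maxModulus hf htrans 0).mono fun r hr => one_pos.trans_le (by simpa using hr)
  obtain ⟨a₀, ha₀⟩ := eventually_atTop.1 (Real.tendsto_exp_atTop.eventually hpos)
  set a := max a₀ 1
  have hconv : ConvexOn ℝ (Ici a) ψ :=
    convexOn_log_maxModulus_exp hf (convex_Ici a) fun s hs => ha₀ s (le_of_max_le_left hs)
  have hψ : ∀ᶠ s in atTop, ∀ c : ℝ, 1 < c → c * ψ s ≤ ψ (c * s) := by
    filter_upwards [eventually_mul_le_log_maxModulus_exp hf htrans (ψ a / a),
      eventually_gt_atTop a] with s hs has c hc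
    exact hconv.mul_le_apply_mul (by positivity) has hs hc.le
  obtain ⟨R, hR⟩ := eventually_atTop.1 (eventually_rpow_le_apply_rpow hpos hψ)
  exact ⟨max R 1, by positivity, fun r hr => hR r (le_of_max_le_left hr)⟩
end

section
/- Let f be a transcendental entire function and suppose the escaping set I(f) contains a spider's web E (a connected set E such that there exist simply connected domains Gₙ with ∂Gₙ ⊂ E, Gₙ ⊂ G_{n+1}, and ∪ₙ Gₙ = ℂ). Then I(f) itself is a spider's web; in particular I(f) is connected. -/
/-!
If `I(f)` were disconnected, complete normality of the plane would give a bounded connected open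
set `W` that meets `I(f)`, misses the web `E`, and has its frontier outside `I(f)`. As `f` is an
open map and `I(f)` is completely invariant, every `f^[k] '' W` is again a bounded connected open
set with frontier outside `I(f)`; since `E` is connected and unbounded, `f^[k] '' W` misses `E`,
so it cannot cross the boundaries `∂Gₙ ⊆ E`. Following an escaping point of `W`, the sets
`f^[k] '' W` eventually leave every bounded set, so all of `closure W` escapes. Then `∂W ⊆ I(f)`
is empty, which is impossible for a nonempty bounded open subset of `ℂ`.
-/

open Metric Filter

/-- The escaping set. -/
def escapingSet (f : ℂ → ℂ) : Set ℂ :=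
  {z | Tendsto (fun n => ‖f^[n] z‖) atTop atTop}

/-- A spider's web: a connected set `E` together with an increasing exhaustion of the plane
by bounded simply connected domains whose boundaries lie in `E`. -/
def SpidersWeb (E : Set ℂ) : Prop :=
  IsConnected E ∧ ∃ G : ℕ → Set ℂ,
    (∀ n, IsOpen (G n) ∧ IsConnected (G n) ∧ Bornology.IsBounded (G n) ∧
      SimplyConnectedSpace (G n) ∧ frontier (G n) ⊆ E ∧ G n ⊆ G (n + 1)) ∧
    (⋃ n, G n) = Set.univ

open Set Bornology

section Topology

variable {X : Type*} [TopologicalSpace X]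

theorem IsOpenMap.iterate {g : X → X} (hg : IsOpenMap g) : ∀ n, IsOpenMap g^[n]
  | 0 => IsOpenMap.id
  | n + 1 => (hg.iterate n).comp hg

theorem IsPreconnected.subset_of_disjoint_frontier {s u : Set X} (hs : IsPreconnected s)
    (hu : IsOpen u) (hsu : (s ∩ u).Nonempty) (hfr : Disjoint s (frontier u)) : s ⊆ u :=
  hs.subset_of_closure_inter_subset hu hsu fun x ⟨hxu, hxs⟩ => by
    by_contra hx
    exact disjoint_left.mp hfr hxs (hu.frontier_eq ▸ ⟨hxu, hx⟩)

theorem IsPreconnected.subset_or_disjoint_of_disjoint_frontier {s u : Set X}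
    (hs : IsPreconnected s) (hu : IsOpen u) (hfr : Disjoint s (frontier u)) :
    s ⊆ u ∨ Disjoint s u := by
  rcases (s ∩ u).eq_empty_or_nonempty with h | h
  · exact Or.inr (disjoint_iff_inter_eq_empty.mpr h)
  · exact Or.inl (hs.subset_of_disjoint_frontier hu h hfr)

theorem frontier_connectedComponentIn_subset [LocallyConnectedSpace X] {F : Set X}
    (hF : IsOpen F) (x : X) : frontier (connectedComponentIn F x) ⊆ frontier F := by
  rw [hF.connectedComponentIn.frontier_eq, hF.frontier_eq]
  rintro y ⟨hyC, hyn⟩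
  refine ⟨closure_mono (connectedComponentIn_subset F x) hyC, fun hyF => hyn ?_⟩
  obtain ⟨w, hwy, hwx⟩ :=
    mem_closure_iff.mp hyC _ hF.connectedComponentIn (mem_connectedComponentIn hyF)
  rw [connectedComponentIn_eq hwx, ← connectedComponentIn_eq hwy]
  exact mem_connectedComponentIn hyF

theorem frontier_image_subset_image_frontier {Y : Type*} [TopologicalSpace Y] [T2Space Y]
    {g : X → Y} (hg : Continuous g) (hg' : IsOpenMap g) {W : Set X} (hW : IsOpen W)
    (hWc : IsCompact (closure W)) : frontier (g '' W) ⊆ g '' frontier W := by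
  rw [(hg' W hW).frontier_eq, hW.frontier_eq]
  rintro y ⟨hy, hyW⟩
  have hcl : closure (g '' W) ⊆ g '' closure W :=
    closure_minimal (image_mono subset_closure) (hWc.image hg).isClosed
  obtain ⟨x, hx, rfl⟩ := hcl hy
  exact ⟨x, ⟨hx, fun hxW => hyW ⟨x, hxW, rfl⟩⟩, rfl⟩

theorem exists_isOpen_superset_disjoint_frontier [CompletelyNormalSpace X] {A B : Set X}
    (hAB : Disjoint (closure A) B) (hBA : Disjoint A (closure B)) :
    ∃ V, IsOpen V ∧ B ⊆ V ∧ Disjoint A V ∧ Disjoint (frontier V) (A ∪ B) := by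
  obtain ⟨U, V, hU, hV, hAU, hBV, hUV⟩ :=
    separatedNhds_iff_disjoint.mpr (completely_normal hAB hBA)
  refine ⟨V, hV, hBV, hUV.mono_left hAU, disjoint_union_right.mpr ⟨?_, ?_⟩⟩
  · exact ((hUV.closure_right hU).mono_left hAU).symm.mono_left frontier_subset_closure
  · rw [hV.frontier_eq]
    exact disjoint_sdiff_left.mono_right hBV

theorem exists_isOpen_isPreconnected_of_not_isPreconnected [CompletelyNormalSpace X]
    [LocallyConnectedSpace X] {E S : Set X} (hE : IsPreconnected E) (hES : E ⊆ S)
    (hS : ¬IsPreconnected S) :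
    ∃ W, IsOpen W ∧ IsPreconnected W ∧ (W ∩ S).Nonempty ∧ Disjoint W E ∧
      Disjoint (frontier W) S := by
  simp only [isPreconnected_iff_subset_of_disjoint, not_forall, not_or] at hS
  obtain ⟨u, v, hu, hv, hSuv, hSuv', hSu, hSv⟩ := hS
  have hEuv : E ⊆ u ∨ E ⊆ v := isPreconnected_iff_subset_of_disjoint.mp hE u v hu hv
    (hES.trans hSuv) (subset_empty_iff.mp (hSuv' ▸ inter_subset_inter_left _ hES))
  wlog hEu : E ⊆ u generalizing u v
  · exact this v u hv hu (union_comm u v ▸ hSuv) (inter_comm u v ▸ hSuv') hSv hSu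
      hEuv.symm (hEuv.resolve_left hEu)
  obtain ⟨z, hzS, hzu⟩ := not_subset.mp hSu
  have hsep {a b : Set X} (hb : IsOpen b) (hab : S ∩ (a ∩ b) = ∅) :
      Disjoint (closure (S ∩ a)) (S ∩ b) := by
    refine disjoint_right.mpr fun x ⟨_, hxb⟩ hxa => ?_
    obtain ⟨y, hyb, hyS, hya⟩ := mem_closure_iff.mp hxa b hb hxb
    exact eq_empty_iff_forall_notMem.mp hab y ⟨hyS, hya, hyb⟩
  obtain ⟨V, hV, hvV, huV, hfrV⟩ := exists_isOpen_superset_disjoint_frontier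
    (hsep hv hSuv') ((hsep hu (inter_comm u v ▸ hSuv')).symm)
  refine ⟨connectedComponentIn V z, hV.connectedComponentIn, isPreconnected_connectedComponentIn,
    ⟨z, mem_connectedComponentIn (hvV ⟨hzS, (hSuv hzS).resolve_left hzu⟩), hzS⟩, ?_, ?_⟩
  · exact (huV.mono_left (subset_inter hES hEu)).symm.mono_left (connectedComponentIn_subset V z)
  · rw [← inter_union_distrib_left, inter_eq_self_of_subset_left hSuv] at hfrV
    exact hfrV.mono_left (frontier_connectedComponentIn_subset hV z)

end Topology

theorem Bornology.IsBounded.eq_empty_of_frontier_eq_empty {V : Type*} [NormedAddCommGroup V]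
    [NormedSpace ℝ V] [Nontrivial V] {U : Set V} (hU : IsBounded U) (hfr : frontier U = ∅) :
    U = ∅ :=
  (frontier_eq_empty_iff.mp hfr).resolve_right fun h => NormedSpace.unbounded_univ ℝ V (h ▸ hU)

namespace SpidersWeb

variable {E : Set ℂ}

theorem mono (h : SpidersWeb E) {F : Set ℂ} (hEF : E ⊆ F) (hF : IsConnected F) :
    SpidersWeb F := by
  obtain ⟨-, G, hG, hGu⟩ := h
  refine ⟨hF, G, fun n => ?_, hGu⟩
  obtain ⟨h₁, h₂, h₃, h₄, h₅, h₆⟩ := hG n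
  exact ⟨h₁, h₂, h₃, h₄, h₅.trans hEF, h₆⟩

theorem exists_superset (h : SpidersWeb E) {K : Set ℂ} (hK : IsBounded K) :
    ∃ U, IsOpen U ∧ IsBounded U ∧ K ⊆ U ∧ frontier U ⊆ E := by
  obtain ⟨-, G, hG, hGu⟩ := h
  have hGmono : Monotone G := monotone_nat_of_le_succ fun n => (hG n).2.2.2.2.2
  obtain ⟨m, hm⟩ := hK.isCompact_closure.elim_directed_cover G (fun n => (hG n).1)
    (hGu ▸ subset_univ _) hGmono.directed_le
  exact ⟨G m, (hG m).1, (hG m).2.2.1, subset_closure.trans hm, (hG m).2.2.2.2.1⟩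

theorem not_isBounded (h : SpidersWeb E) : ¬IsBounded E := by
  intro hE
  obtain ⟨U, hU, hUb, hEU, hfr⟩ := h.exists_superset hE
  have hUfr : frontier U = ∅ :=
    subset_empty_iff.mp fun x hx => (hU.frontier_eq ▸ hx).2 (hEU (hfr hx))
  exact h.1.nonempty.ne_empty (subset_empty_iff.mp (hUb.eq_empty_of_frontier_eq_empty hUfr ▸ hEU))

theorem isBounded_of_disjoint (h : SpidersWeb E) {S : Set ℂ} (hS : IsPreconnected S)
    (hSE : Disjoint S E) : IsBounded S := by
  rcases S.eq_empty_or_nonempty with rfl | ⟨z, hz⟩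
  · exact isBounded_empty
  obtain ⟨U, hU, hUb, hzU, hfr⟩ := h.exists_superset (isBounded_singleton (x := z))
  exact hUb.subset (hS.subset_of_disjoint_frontier hU ⟨z, hz, hzU rfl⟩ (hSE.mono_right hfr))

theorem disjoint_of_disjoint_frontier (h : SpidersWeb E) {U : Set ℂ} (hU : IsOpen U)
    (hUb : IsBounded U) (hfr : Disjoint E (frontier U)) : Disjoint U E :=
  ((h.1.isPreconnected.subset_or_disjoint_of_disjoint_frontier hU hfr).resolve_left
    fun hEU => h.not_isBounded (hUb.subset hEU)).symm

end SpidersWeb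

section EscapingSet

variable {f : ℂ → ℂ}

theorem mem_escapingSet_iff_tendsto_cobounded {z : ℂ} :
    z ∈ escapingSet f ↔ Tendsto (fun n => f^[n] z) atTop (cobounded ℂ) :=
  tendsto_norm_atTop_iff_cobounded

theorem iterate_mem_escapingSet_iff (k : ℕ) {z : ℂ} :
    f^[k] z ∈ escapingSet f ↔ z ∈ escapingSet f := by
  simp only [escapingSet, mem_ofPred_eq, ← Function.iterate_add_apply]
  exact tendsto_add_atTop_iff_nat (f := fun n => ‖f^[n] z‖) k

theorem Differentiable.isOpenMap_of_escapingSet_nonempty (hf : Differentiable ℂ f)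
    (hI : (escapingSet f).Nonempty) : IsOpenMap f := by
  refine (Complex.analyticOnNhd_univ_iff_differentiable.mpr hf).is_constant_or_isOpenMap
    |>.resolve_left ?_
  rintro ⟨w, hw⟩
  obtain ⟨z, hz⟩ := hI
  have hconst : (fun n => ‖f^[n + 1] z‖) = fun _ => ‖w‖ :=
    funext fun n => by rw [Function.iterate_succ_apply', hw]
  exact not_tendsto_const_atTop ‖w‖ atTop (hconst ▸ (tendsto_add_atTop_iff_nat 1).mpr hz)

variable (hfc : Continuous f) (hfo : IsOpenMap f)
include hfc hfo

theorem disjoint_frontier_image_iterate_escapingSet {W : Set ℂ} (hW : IsOpen W)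
    (hWb : IsBounded W) (hfr : Disjoint (frontier W) (escapingSet f)) (k : ℕ) :
    Disjoint (frontier (f^[k] '' W)) (escapingSet f) := by
  refine disjoint_left.mpr fun y hy hyI => ?_
  obtain ⟨x, hx, rfl⟩ := frontier_image_subset_image_frontier (hfc.iterate k) (hfo.iterate k) hW
    hWb.isCompact_closure hy
  exact disjoint_left.mp hfr hx ((iterate_mem_escapingSet_iff k).mp hyI)

theorem closure_subset_escapingSet {E : Set ℂ} (hE : SpidersWeb E) (hEI : E ⊆ escapingSet f)
    {W : Set ℂ} (hW : IsOpen W) (hWc : IsPreconnected W) (hWb : IsBounded W)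
    (hWI : (W ∩ escapingSet f).Nonempty) (hfr : Disjoint (frontier W) (escapingSet f)) :
    closure W ⊆ escapingSet f := by
  obtain ⟨z, hzW, hzI⟩ := hWI
  intro x hx
  rw [mem_escapingSet_iff_tendsto_cobounded] at hzI ⊢
  refine tendsto_iff_forall_eventually_mem.mpr fun K hK => ?_
  obtain ⟨U, hU, hUb, hKU, hUE⟩ := hE.exists_superset (isBounded_compl_iff.mpr hK)
  filter_upwards [hzI.eventually_mem hUb.compl] with k hkz
  have hT : IsOpen (f^[k] '' W) := hfo.iterate k W hW
  have hTb : IsBounded (f^[k] '' W) :=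
    (hWb.isCompact_closure.image (hfc.iterate k)).isBounded.subset (image_mono subset_closure)
  have hTE : Disjoint (f^[k] '' W) E := hE.disjoint_of_disjoint_frontier hT hTb
    ((disjoint_frontier_image_iterate_escapingSet hfc hfo hW hWb hfr k).symm.mono_left hEI)
  have hTU : Disjoint (f^[k] '' W) U :=
    ((hWc.image _ (hfc.iterate k).continuousOn).subset_or_disjoint_of_disjoint_frontier hU
      (hTE.mono_right hUE)).resolve_left fun h => hkz (h ⟨z, hzW, rfl⟩)
  have hxU : f^[k] x ∉ U := disjoint_left.mp (hTU.closure_left hU)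
    (image_closure_subset_closure_image (hfc.iterate k) ⟨x, hx, rfl⟩)
  by_contra hxK
  exact hxU (hKU hxK)

end EscapingSet

theorem isPreconnected_escapingSet {f : ℂ → ℂ} (hf : Differentiable ℂ f) {E : Set ℂ}
    (hE : SpidersWeb E) (hEI : E ⊆ escapingSet f) : IsPreconnected (escapingSet f) := by
  have hfo := hf.isOpenMap_of_escapingSet_nonempty (hE.1.nonempty.mono hEI)
  by_contra hI
  obtain ⟨W, hW, hWc, hWI, hWE, hfr⟩ :=
    exists_isOpen_isPreconnected_of_not_isPreconnected hE.1.isPreconnected hEI hI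
  have hWb := hE.isBounded_of_disjoint hWc hWE
  have hcl := closure_subset_escapingSet hf.continuous hfo hE hEI hW hWc hWb hWI hfr
  have hWfr : frontier W = ∅ := subset_empty_iff.mp fun x hx =>
    disjoint_left.mp hfr hx (hcl (frontier_subset_closure hx))
  exact hWI.ne_empty (by rw [hWb.eq_empty_of_frontier_eq_empty hWfr, empty_inter])

theorem escaping_set_spiders_web_general
    (f : ℂ → ℂ) (hf : Differentiable ℂ f)
    (E : Set ℂ) (hE : E ⊆ escapingSet f) (hEweb : SpidersWeb E) :
    SpidersWeb (escapingSet f) ∧ IsConnected (escapingSet f) := by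
  have hI : IsConnected (escapingSet f) :=
    ⟨hEweb.1.nonempty.mono hE, isPreconnected_escapingSet hf hEweb hE⟩
  exact ⟨hEweb.mono hE hI, hI⟩

theorem escaping_set_spiders_web
    (f : ℂ → ℂ) (hf : Differentiable ℂ f)
    (htrans : ∀ p : Polynomial ℂ, f ≠ fun z => p.eval z)
    (E : Set ℂ) (hE : E ⊆ escapingSet f) (hEweb : SpidersWeb E) :
    SpidersWeb (escapingSet f) ∧ IsConnected (escapingSet f) :=
  escaping_set_spiders_web_general f hf E hE hEweb
end
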